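/- arXiv:2305.07674 — 4 statements merged into one kernel-verified Lean document; each statement's English description precedes it below -/
import Mathlib

section
/- Every nonempty open subsemigroup T of a compact topological group M is an open subgroup of M, and it contains the identity component M₀ of M. -/
/-!
In a compact group the powers `a ^ n`, `n ≥ 1`, of any element accumulate at `a⁻¹`, so a closed
subsemigroup is closed under inversion. For an open subsemigroup `T` this puts `T⁻¹` in
`closure T`, and openness of `T` then forces `closure T ⊆ T`. Hence `T` is a clopen subgroup,
which contains the identity component.
-/

open Filter Set

theorem pow_succ_mem_of_mul_mem {M : Type*} [Monoid M] {T : Set M}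
    (hmul : ∀ a ∈ T, ∀ b ∈ T, a * b ∈ T) {a : M} (ha : a ∈ T) (n : ℕ) : a ^ (n + 1) ∈ T := by
  induction n with
  | zero => simpa using ha
  | succ n ih => simpa only [pow_succ] using hmul _ ih _ ha

theorem inv_mem_closure_of_mul_mem {M : Type*} [Group M] [TopologicalSpace M]
    [IsTopologicalGroup M] [CompactSpace M] {T : Set M} (hmul : ∀ a ∈ T, ∀ b ∈ T, a * b ∈ T)
    {a : M} (ha : a ∈ T) : a⁻¹ ∈ closure T := by
  have hcluster : MapClusterPt a⁻¹ atTop (a ^ · : ℕ → M) := by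
    simpa using mapClusterPt_self_zpow_atTop_pow a (-1)
  refine isClosed_closure.mem_of_mapClusterPt hcluster (eventually_atTop.2 ⟨1, fun n hn ↦ ?_⟩)
  obtain ⟨k, rfl⟩ := Nat.exists_eq_add_of_le' hn
  exact subset_closure (pow_succ_mem_of_mul_mem hmul ha k)

theorem IsOpen.closure_subset_of_mul_mem {M : Type*} [Group M] [TopologicalSpace M]
    [IsTopologicalGroup M] {T : Set M} (hT : IsOpen T) (hmul : ∀ a ∈ T, ∀ b ∈ T, a * b ∈ T)
    {t : M} (ht : t ∈ T) (ht' : t⁻¹ ∈ closure T) : closure T ⊆ T := by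
  intro x hx
  -- `x = s * (s⁻¹ * x)`, and `U` is the open set of those `s` with `s⁻¹ * x ∈ T`.
  set U := (fun s ↦ s⁻¹ * x) ⁻¹' T
  have hU : IsOpen U := hT.preimage (by fun_prop)
  have hxt : x * t⁻¹ ∈ closure T ∩ U :=
    ⟨map_mem_closure₂ continuous_mul hx ht' hmul, by simpa [U, mul_assoc] using ht⟩
  obtain ⟨s, hsT, hsU⟩ := (closure_inter_open_nonempty_iff hU).1 ⟨_, hxt⟩
  simpa using hmul s hsT _ hsU

theorem stmt1 {M : Type*} [Group M] [TopologicalSpace M] [IsTopologicalGroup M]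
    [CompactSpace M] (T : Set M) (hne : T.Nonempty) (hopen : IsOpen T)
    (hmul : ∀ a ∈ T, ∀ b ∈ T, a * b ∈ T) :
    (1 : M) ∈ T ∧ (∀ a ∈ T, a⁻¹ ∈ T) ∧ connectedComponent (1 : M) ⊆ T := by
  obtain ⟨t, ht⟩ := hne
  have hinv_closure : ∀ a ∈ T, a⁻¹ ∈ closure T := fun a ha ↦ inv_mem_closure_of_mul_mem hmul ha
  have hclosed : IsClosed T :=
    closure_subset_iff_isClosed.1 (hopen.closure_subset_of_mul_mem hmul ht (hinv_closure t ht))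
  have hinv : ∀ a ∈ T, a⁻¹ ∈ T := fun a ha ↦ hclosed.closure_subset (hinv_closure a ha)
  have hone : (1 : M) ∈ T := by simpa using hmul t ht _ (hinv t ht)
  exact ⟨hone, hinv, IsClopen.connectedComponent_subset ⟨hclosed, hopen⟩ hone⟩
end

section
/- Let x = (x₁,x₂) and y = (y₁,y₂) be vectors in ℝ² with all entries strictly positive, and define g = √(x₁x₂/(3y₁y₂)) · [[2y₁/x₁, y₁/x₂],[y₂/x₁, 2y₂/x₂]]. Then g has determinant 1, all entries of g are strictly positive, and g x is a positive scalar multiple of y (so g maps the ray through x to the ray through y). -/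
/-!
The unscaled matrix `M = [[2y₁/x₁, y₁/x₂], [y₂/x₁, 2y₂/x₂]]` sends `x` to `3y` and has determinant
`3y₁y₂/(x₁x₂)`, so the prefactor is exactly `(det M)^(-1/2)`, which normalizes the determinant to 1.
-/

open Matrix

theorem Matrix.det_sqrt_inv_det_smul {A : Matrix (Fin 2) (Fin 2) ℝ} (hA : 0 < A.det) :
    (√(A.det⁻¹) • A).det = 1 := by
  rw [det_smul, Fintype.card_fin, Real.sq_sqrt (inv_nonneg.2 hA.le), inv_mul_cancel₀ hA.ne']

theorem Matrix.smul_apply_pos {m n : Type*} {A : Matrix m n ℝ} {c : ℝ} (hc : 0 < c)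
    (hA : ∀ i j, 0 < A i j) (i : m) (j : n) : 0 < (c • A) i j :=
  mul_pos hc (hA i j)

section RayMatrix

variable {x₁ x₂ y₁ y₂ : ℝ}

theorem det_rayMatrix (hx₁ : x₁ ≠ 0) (hx₂ : x₂ ≠ 0) :
    !![2 * y₁ / x₁, y₁ / x₂; y₂ / x₁, 2 * y₂ / x₂].det = 3 * (y₁ * y₂) / (x₁ * x₂) := by
  rw [det_fin_two_of]
  field_simp
  ring

theorem rayMatrix_mulVec (hx₁ : x₁ ≠ 0) (hx₂ : x₂ ≠ 0) :
    !![2 * y₁ / x₁, y₁ / x₂; y₂ / x₁, 2 * y₂ / x₂] *ᵥ ![x₁, x₂] = (3 : ℝ) • ![y₁, y₂] := by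
  ext i
  fin_cases i <;> simp [mulVec, dotProduct, Fin.sum_univ_two] <;> field_simp <;> ring

theorem rayMatrix_apply_pos (hx₁ : 0 < x₁) (hx₂ : 0 < x₂) (hy₁ : 0 < y₁) (hy₂ : 0 < y₂)
    (i j : Fin 2) : 0 < !![2 * y₁ / x₁, y₁ / x₂; y₂ / x₁, 2 * y₂ / x₂] i j := by
  fin_cases i <;> fin_cases j <;> simp <;> positivity

end RayMatrix

theorem stmt12 (x₁ x₂ y₁ y₂ : ℝ) (hx₁ : 0 < x₁) (hx₂ : 0 < x₂)
    (hy₁ : 0 < y₁) (hy₂ : 0 < y₂) :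
    (Real.sqrt (x₁ * x₂ / (3 * (y₁ * y₂))) •
        !![2 * y₁ / x₁, y₁ / x₂; y₂ / x₁, 2 * y₂ / x₂]).det = 1 ∧
    (∀ i j, 0 < (Real.sqrt (x₁ * x₂ / (3 * (y₁ * y₂))) •
        !![2 * y₁ / x₁, y₁ / x₂; y₂ / x₁, 2 * y₂ / x₂]) i j) ∧
    (∃ c : ℝ, 0 < c ∧
      (Real.sqrt (x₁ * x₂ / (3 * (y₁ * y₂))) •
        !![2 * y₁ / x₁, y₁ / x₂; y₂ / x₁, 2 * y₂ / x₂]).mulVec ![x₁, x₂] = c • ![y₁, y₂]) := by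
  have hdet := det_rayMatrix (y₁ := y₁) (y₂ := y₂) hx₁.ne' hx₂.ne'
  have hscale : x₁ * x₂ / (3 * (y₁ * y₂)) =
      !![2 * y₁ / x₁, y₁ / x₂; y₂ / x₁, 2 * y₂ / x₂].det⁻¹ := by
    rw [hdet, inv_div]
  have hs : 0 < √(x₁ * x₂ / (3 * (y₁ * y₂))) := by positivity
  refine ⟨?_, smul_apply_pos hs (rayMatrix_apply_pos hx₁ hx₂ hy₁ hy₂),
    √(x₁ * x₂ / (3 * (y₁ * y₂))) * 3, by positivity, ?_⟩
  · rw [hscale]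
    exact det_sqrt_inv_det_smul (hdet ▸ by positivity)
  · rw [smul_mulVec, rayMatrix_mulVec hx₁.ne' hx₂.ne', smul_smul]
end

section
/- Let x = (x₁,x₂,x₃) and y = (y₁,y₂,y₃) be vectors in ℝ³ with all entries strictly positive, and define g' = ∛(x₁x₂x₃/(4y₁y₂y₃)) · M, where M is the 3×3 matrix with entries M_{ij} = (1 + δ_{ij}) y_i / x_j. Then g' ∈ SL(3,ℝ), all entries of g' are strictly positive, and g' x is a positive scalar multiple of y. -/
theorem stmt14 (x y : Fin 3 → ℝ) (hx : ∀ i, 0 < x i) (hy : ∀ i, 0 < y i) :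
    ((x 0 * x 1 * x 2 / (4 * (y 0 * y 1 * y 2))) ^ ((1 : ℝ) / 3) •
        Matrix.of (fun i j : Fin 3 => (if i = j then 2 else 1) * y i / x j)).det = 1 ∧
    (∀ i j, 0 < ((x 0 * x 1 * x 2 / (4 * (y 0 * y 1 * y 2))) ^ ((1 : ℝ) / 3) •
        Matrix.of (fun i j : Fin 3 => (if i = j then 2 else 1) * y i / x j)) i j) ∧
    (∃ c : ℝ, 0 < c ∧
      ((x 0 * x 1 * x 2 / (4 * (y 0 * y 1 * y 2))) ^ ((1 : ℝ) / 3) •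
        Matrix.of (fun i j : Fin 3 => (if i = j then 2 else 1) * y i / x j)).mulVec x
        = c • y) := by
  set a : ℝ := x 0 * x 1 * x 2 / (4 * (y 0 * y 1 * y 2)) with ha
  have hx0 := hx 0; have hx1 := hx 1; have hx2 := hx 2
  have hy0 := hy 0; have hy1 := hy 1; have hy2 := hy 2
  have hapos : 0 < a := by positivity
  set s : ℝ := a ^ ((1 : ℝ) / 3) with hsdef
  have hspos : 0 < s := Real.rpow_pos_of_pos hapos _
  have hs3 : s ^ 3 = a := by
    rw [hsdef, ← Real.rpow_natCast (a ^ ((1:ℝ)/3)) 3, ← Real.rpow_mul hapos.le]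
    norm_num
  refine ⟨?_, ?_, ?_⟩
  · rw [Matrix.det_smul, Matrix.det_fin_three]
    simp only [Matrix.of_apply, Fintype.card_fin]
    norm_num [Fin.ext_iff]
    field_simp
    rw [hs3, ha]
    field_simp
    ring
  · intro i j
    simp only [Matrix.smul_apply, Matrix.of_apply, smul_eq_mul]
    have := hx j; have := hy i
    split <;> positivity
  · refine ⟨4 * s, by positivity, ?_⟩
    funext i
    simp only [Matrix.mulVec, Matrix.smul_apply, Matrix.of_apply, dotProduct,
      Pi.smul_apply, smul_eq_mul, Fin.sum_univ_three]
    fin_cases i <;> · simp; field_simp; ring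
end

section
/- The invariant control set of the semigroup S = SL⁺(2,ℝ) (determinant-1 matrices with positive entries) acting on ℙ¹ is C = {[(x₁,x₂)] : x₁ ≥ 0, x₂ ≥ 0}; concretely: (i) S·C ⊆ C, (ii) for any two points [x],[y] in the interior of C there exists g ∈ S with g[x] = [y], and (iii) for any [x] ∈ C, C ⊆ cl(S[x]). -/
open scoped LinearAlgebra.Projectivization

/-- Topology on the real projective line (quotient topology from the nonzero vectors). -/
noncomputable instance : TopologicalSpace (Projectivization ℝ (Fin 2 → ℝ)) :=
  instTopologicalSpaceQuotient

/-- The action of `SL(2,ℝ)` on the projective line `ℙ¹`. -/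
noncomputable def slAct (g : Matrix.SpecialLinearGroup (Fin 2) ℝ)
    (p : Projectivization ℝ (Fin 2 → ℝ)) : Projectivization ℝ (Fin 2 → ℝ) :=
  Projectivization.map (Matrix.mulVecLin g.1)
    (by
      have : Function.Injective g.1.mulVec :=
        Matrix.mulVec_injective_iff_isUnit.2 (Matrix.isUnit_iff_isUnit_det g.1 |>.2 (by
          simp [g.2]))
      exact this) p

/-- `C = {[(x₁,x₂)] : x₁ ≥ 0, x₂ ≥ 0} ⊆ ℙ¹`. -/
def Cset : Set (Projectivization ℝ (Fin 2 → ℝ)) :=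
  {p | ∃ v : Fin 2 → ℝ, ∃ hv : v ≠ 0, (∀ i, 0 ≤ v i) ∧ p = Projectivization.mk ℝ v hv}

/-!
A positive matrix maps every nonzero nonnegative vector to a positive one, which gives the
invariance of `C`. Conversely, for `v ≥ 0` nonzero and `w > 0` the positive matrix
`A = !![w₀ (1 + v₀ + v₁), w₀; w₁ (1 + v₀), w₁ (1 + v₀)]` satisfies `A v = (1 + v₀)(v₀ + v₁) w`
and `det A = w₀ w₁ (1 + v₀)(v₀ + v₁) > 0`, so a positive multiple of `A` lies in `SL⁺(2,ℝ)` and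
sends `[v]` to `[w]`. Every point `[u]` of `C` is a limit of the interior points
`[u + (1, 1)/(n + 1)]`, all of which lie in `S[v]`.
-/

open Matrix Filter Topology

lemma exists_pos_of_nonneg_of_ne_zero {ι : Type*} {v : ι → ℝ} (h0 : ∀ i, 0 ≤ v i)
    (hv : v ≠ 0) : ∃ i, 0 < v i :=
  (Pi.lt_def.1 (lt_of_le_of_ne h0 (Ne.symm hv))).2

lemma mulVec_pos_of_pos_of_nonneg {m n : Type*} [Fintype n] {A : Matrix m n ℝ}
    (hA : ∀ i j, 0 < A i j) {v : n → ℝ} (h0 : ∀ j, 0 ≤ v j) (hv : v ≠ 0) (i : m) :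
    0 < (A *ᵥ v) i := by
  obtain ⟨j, hj⟩ := exists_pos_of_nonneg_of_ne_zero h0 hv
  exact Finset.sum_pos' (fun k _ => mul_nonneg (hA i k).le (h0 k))
    ⟨j, Finset.mem_univ j, mul_pos (hA i j) hj⟩

lemma exists_pos_smul_mem_specialLinearGroup {n : Type*} [Fintype n] [DecidableEq n]
    [Nonempty n] {A : Matrix n n ℝ} (hA : 0 < A.det) :
    ∃ c : ℝ, 0 < c ∧ ∃ g : SpecialLinearGroup n ℝ, g.1 = c • A := by
  refine ⟨(A.det ^ ((Fintype.card n : ℝ)⁻¹))⁻¹, by positivity, ⟨_, ?_⟩, rfl⟩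
  rw [det_smul, inv_pow, Real.rpow_inv_natCast_pow hA.le Fintype.card_ne_zero,
    inv_mul_cancel₀ hA.ne']

lemma slAct_mk (g : SpecialLinearGroup (Fin 2) ℝ) {v : Fin 2 → ℝ} (hv : v ≠ 0)
    (hgv : g.1 *ᵥ v ≠ 0) :
    slAct g (Projectivization.mk ℝ v hv) = Projectivization.mk ℝ (g.1 *ᵥ v) hgv :=
  Projectivization.map_mk _ _ _ _

lemma slAct_mk_eq_mk_of_mulVec_eq_smul (g : SpecialLinearGroup (Fin 2) ℝ)
    {v w : Fin 2 → ℝ} (hv : v ≠ 0) (hw : w ≠ 0) {s : ℝ} (hs : s ≠ 0)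
    (hgv : g.1 *ᵥ v = s • w) :
    slAct g (Projectivization.mk ℝ v hv) = Projectivization.mk ℝ w hw := by
  have hne : g.1 *ᵥ v ≠ 0 := by rw [hgv]; exact smul_ne_zero hs hw
  rw [slAct_mk g hv hne, Projectivization.mk_eq_mk_iff' ℝ _ _ hne hw]
  exact ⟨s, hgv.symm⟩

theorem slAct_mem_Cset {g : SpecialLinearGroup (Fin 2) ℝ} (hg : ∀ i j, 0 < g.1 i j)
    {p : ℙ ℝ (Fin 2 → ℝ)} (hp : p ∈ Cset) : slAct g p ∈ Cset := by
  obtain ⟨v, hv, hv0, rfl⟩ := hp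
  have hgv := mulVec_pos_of_pos_of_nonneg hg hv0 hv
  have hne : g.1 *ᵥ v ≠ 0 := fun h => (hgv 0).ne' (by simp [h])
  exact ⟨_, hne, fun i => (hgv i).le, slAct_mk g hv hne⟩

theorem exists_pos_slAct_mk_eq {v w : Fin 2 → ℝ} (hv : v ≠ 0) (hw : w ≠ 0)
    (hv0 : ∀ i, 0 ≤ v i) (hw0 : ∀ i, 0 < w i) :
    ∃ g : SpecialLinearGroup (Fin 2) ℝ, (∀ i j, 0 < g.1 i j) ∧
      slAct g (Projectivization.mk ℝ v hv) = Projectivization.mk ℝ w hw := by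
  have hsum : 0 < v 0 + v 1 := by
    obtain ⟨i, hi⟩ := exists_pos_of_nonneg_of_ne_zero hv0 hv
    fin_cases i <;> simp only [Fin.zero_eta, Fin.mk_one] at hi <;> linarith [hv0 0, hv0 1]
  have hv00 := hv0 0
  have hv01 := hv0 1
  have hw00 := hw0 0
  have hw01 := hw0 1
  set A : Matrix (Fin 2) (Fin 2) ℝ :=
    !![w 0 * (1 + v 0 + v 1), w 0; w 1 * (1 + v 0), w 1 * (1 + v 0)]
  have hA : ∀ i j, 0 < A i j := by
    intro i j; fin_cases i <;> fin_cases j <;> simp [A] <;> positivity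
  have hAv : A *ᵥ v = ((1 + v 0) * (v 0 + v 1)) • w := by
    ext i; fin_cases i <;> simp [A, mulVec, dotProduct, Fin.sum_univ_two] <;> ring
  have hdet : 0 < A.det := by
    have : A.det = w 0 * w 1 * (1 + v 0) * (v 0 + v 1) := by rw [det_fin_two_of]; ring
    rw [this]; positivity
  obtain ⟨c, hc, g, hg⟩ := exists_pos_smul_mem_specialLinearGroup hdet
  refine ⟨g, fun i j => hg ▸ mul_pos hc (hA i j), ?_⟩
  refine slAct_mk_eq_mk_of_mulVec_eq_smul g hv hw (s := c * ((1 + v 0) * (v 0 + v 1)))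
    (by positivity) ?_
  rw [hg, smul_mulVec, hAv, smul_smul]

lemma tendsto_mk {ι : Type*} {l : Filter ι} {f : ι → Fin 2 → ℝ} (hf : ∀ i, f i ≠ 0)
    {u : Fin 2 → ℝ} (hu : u ≠ 0) (h : Tendsto f l (𝓝 u)) :
    Tendsto (fun i => Projectivization.mk ℝ (f i) (hf i)) l (𝓝 (Projectivization.mk ℝ u hu)) :=
  (continuous_quotient_mk'.tendsto ⟨u, hu⟩).comp (tendsto_subtype_rng.2 h)

theorem Cset_subset_closure_orbit {p : ℙ ℝ (Fin 2 → ℝ)} (hp : p ∈ Cset) :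
    Cset ⊆ closure
      {q | ∃ g : SpecialLinearGroup (Fin 2) ℝ, (∀ i j, 0 < g.1 i j) ∧ q = slAct g p} := by
  obtain ⟨v, hv, hv0, rfl⟩ := hp
  rintro _ ⟨u, hu, hu0, rfl⟩
  set f : ℕ → Fin 2 → ℝ := fun n => u + (1 / ((n : ℝ) + 1)) • 1
  have hf0 : ∀ n i, 0 < f n i := fun n i => by
    have := hu0 i
    simp only [f, Pi.add_apply, Pi.smul_apply, Pi.one_apply, smul_eq_mul, mul_one]
    positivity
  have hf : ∀ n, f n ≠ 0 := fun n h => (hf0 n 0).ne' (by simp [h])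
  have hlim : Tendsto f atTop (𝓝 (u + (0 : ℝ) • 1)) :=
    tendsto_const_nhds.add
      ((tendsto_one_div_add_atTop_nhds_zero_nat (𝕜 := ℝ)).smul_const (1 : Fin 2 → ℝ))
  rw [zero_smul, add_zero] at hlim
  refine mem_closure_of_tendsto (tendsto_mk hf hu hlim) (Eventually.of_forall fun n => ?_)
  obtain ⟨g, hg, hgv⟩ := exists_pos_slAct_mk_eq hv (hf n) hv0 (hf0 n)
  exact ⟨g, hg, hgv.symm⟩

/-- `C` is the invariant control set of `SL⁺(2,ℝ)` on `ℙ¹`: it is invariant, the semigroup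
acts transitively on its interior points, and `C ⊆ cl(S[x])` for every `[x] ∈ C`. -/
theorem stmt15 :
    (∀ g : Matrix.SpecialLinearGroup (Fin 2) ℝ, (∀ i j, 0 < g.1 i j) →
      ∀ p ∈ Cset, slAct g p ∈ Cset) ∧
    (∀ v w : Fin 2 → ℝ, ∀ hv : v ≠ 0, ∀ hw : w ≠ 0, (∀ i, 0 < v i) → (∀ i, 0 < w i) →
      ∃ g : Matrix.SpecialLinearGroup (Fin 2) ℝ, (∀ i j, 0 < g.1 i j) ∧
        slAct g (Projectivization.mk ℝ v hv) = Projectivization.mk ℝ w hw) ∧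
    (∀ p ∈ Cset, Cset ⊆ closure
      {q | ∃ g : Matrix.SpecialLinearGroup (Fin 2) ℝ, (∀ i j, 0 < g.1 i j) ∧ q = slAct g p}) :=
  ⟨fun _ hg _ hp => slAct_mem_Cset hg hp,
    fun _ _ hv hw hv0 hw0 => exists_pos_slAct_mk_eq hv hw (fun i => (hv0 i).le) hw0,
    fun _ hp => Cset_subset_closure_orbit hp⟩
end
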